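/- Fix an integer m ≥ 2. Every n ∈ ℕ admits exactly one representation n = Σ_{j=0}^{L} ε_j F_j^{(m)} with L ∈ ℕ and digits ε_j ∈ {0,1} such that no m consecutive digits ε_{j+m−1}, ε_{j+m−2}, …, ε_j are all equal to 1 (uniqueness up to appending leading zero digits). -/

import Mathlib

open MeasureTheory Filter Set

namespace Mbon

/-- The `m`-bonacci sequence `F m`. -/
noncomputable def F (m : ℕ) : ℕ → ℕ := fun k =>
  Nat.strongRecOn k fun k ih =>
    if h : k < m then 2 ^ k
    else ∑ j ∈ (Finset.range m).attach,
      ih (k - (j : ℕ) - 1) (by have := Finset.mem_range.mp j.2; omega)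

/-- `ε : ℕ → ℕ` is the (unique) greedy digit string of `n` in the `m`-bonacci
numeration system: digits in `{0,1}`, finitely many nonzero digits, no `m`
consecutive digits all equal to `1`, and the digits represent `n`. -/
def IsGreedy (m n : ℕ) (ε : ℕ → ℕ) : Prop :=
  (∀ j, ε j ≤ 1) ∧
  (∀ j, ¬ (∀ i, i < m → ε (j + i) = 1)) ∧
  (∃ J, (∀ j, J ≤ j → ε j = 0) ∧ n = ∑ j ∈ Finset.range J, ε j * F m j)

/-- digits indexed by `ℤ`, with the convention `ε_j = 0` for `j < 0`. -/
def digZ (ε : ℕ → ℕ) (j : ℤ) : ℕ := if 0 ≤ j then ε j.toNat else 0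

/-- `r` is such that `ε_{k-1} = ⋯ = ε_{k-r} = 1` and `ε_{k-r-1} = 0`. -/
def RunLen (m : ℕ) (ε : ℕ → ℕ) (k r : ℕ) : Prop :=
  r < m ∧ (∀ i : ℕ, 1 ≤ i → i ≤ r → digZ ε ((k : ℤ) - i) = 1) ∧
    digZ ε ((k : ℤ) - r - 1) = 0

/-- `φ` is the `m`-bonacci number: the real root `> 1` of `x^m = x^{m-1}+⋯+x+1`. -/
def IsPhi (m : ℕ) (φ : ℝ) : Prop := 1 < φ ∧ φ ^ m = ∑ i ∈ Finset.range m, φ ^ i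

/-- the `φ`-adic van der Corput value `V_φ(n) = Σ_j ε_j(n) φ^{-j-1}`. -/
noncomputable def VdC (φ : ℝ) (ε : ℕ → ℕ) : ℝ := ∑' j : ℕ, (ε j : ℝ) * φ ^ (-(j : ℤ) - 1)

/-- `μ_k = Σ_{j=0}^{k-1} ε_{k-1-j} φ^j`. -/
noncomputable def muk (φ : ℝ) (ε : ℕ → ℕ) (k : ℕ) : ℝ :=
  ∑ j ∈ Finset.range k, (ε (k - 1 - j) : ℝ) * φ ^ j

/-- `ν_k = Σ_{j=0}^{k-1} ε_j F_j^{(m)}`. -/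
noncomputable def nuk (m : ℕ) (ε : ℕ → ℕ) (k : ℕ) : ℕ := ∑ j ∈ Finset.range k, ε j * F m j

/-- The substitution `σ_m` on the alphabet `Fin m` (`0`-based; the letter `i+1`
of the paper corresponds to `i : Fin m`): `σ(i) = 1(i+1)` for `i < m`, `σ(m) = 1`. -/
def sub {m : ℕ} (i : Fin m) : List (Fin m) :=
  if h : (i : ℕ) + 1 < m then [⟨0, i.pos⟩, ⟨(i : ℕ) + 1, h⟩] else [⟨0, i.pos⟩]

/-- extension of `σ_m` to words. -/
def subw {m : ℕ} (w : List (Fin m)) : List (Fin m) := w.flatMap sub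

/-- `σ_m^k(1)`, a prefix of the infinite fixed point of `σ_m`. -/
def fixWord (m : ℕ) (k : ℕ) : List (Fin m) :=
  subw^[k] (if h : 0 < m then [⟨0, h⟩] else [])

/-- abelianization `l(w)` of a word, as a vector in `ℝ^m`. -/
noncomputable def ab {m : ℕ} (w : List (Fin m)) : Fin m → ℝ := fun i => (w.count i : ℝ)

/-- The incidence matrix `B_m` of `σ_m`; its `(i,j)` entry is `|σ_m(j)|_i`. -/
noncomputable def B (m : ℕ) : Matrix (Fin m) (Fin m) ℝ :=
  Matrix.of fun i j => ((sub j).count i : ℝ)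

/-- `u` is a right eigenvector of `B_m` for the eigenvalue `φ`. -/
def IsRightEv (m : ℕ) (φ : ℝ) (u : Fin m → ℝ) : Prop := u ≠ 0 ∧ (B m).mulVec u = φ • u

/-- `v` is a left eigenvector of `B_m` for the eigenvalue `φ`. -/
def IsLeftEv (m : ℕ) (φ : ℝ) (v : Fin m → ℝ) : Prop := v ≠ 0 ∧ (B m).vecMul v = φ • v

/-- the projection `π_c` onto `v^⊥` along `u`. -/
noncomputable def proj {m : ℕ} (u v : Fin m → ℝ) (x : Fin m → ℝ) : Fin m → ℝ :=
  x - ((∑ i, v i * x i) / (∑ i, v i * u i)) • u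

/-- the hyperplane `v^⊥ = {x : ⟨v,x⟩ = 0}`. -/
def vperp {m : ℕ} (v : Fin m → ℝ) : Set (Fin m → ℝ) := {x | ∑ i, v i * x i = 0}

/-- standard basis vector `e_{i+1}` of `ℝ^m`. -/
def stdb {m : ℕ} (i : Fin m) : Fin m → ℝ := Pi.single i 1

/-- the first standard basis vector `e_1` of `ℝ^m`. -/
def e1 (m : ℕ) : Fin m → ℝ := fun j => if (j : ℕ) = 0 then 1 else 0

/-- the lattice `L_m = ⟨π_c(e_1-e_2),…,π_c(e_1-e_m)⟩_ℤ`. -/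
def latt {m : ℕ} (u v : Fin m → ℝ) : AddSubgroup (Fin m → ℝ) :=
  AddSubgroup.closure {x | ∃ i : Fin m, (i : ℕ) ≠ 0 ∧ x = proj u v (e1 m - stdb i)}

/-- a fundamental mesh of the lattice `L_m`. -/
def mesh {m : ℕ} (u v : Fin m → ℝ) : Set (Fin m → ℝ) :=
  {x | ∃ t : Fin m → ℝ, (∀ i, 0 ≤ t i ∧ t i < 1) ∧
    x = ∑ i ∈ Finset.univ.filter (fun i : Fin m => (i : ℕ) ≠ 0),
      t i • proj u v (e1 m - stdb i)}

/-- the Lebesgue measure `λ_v` on `v^⊥`, normalized so that a fundamental mesh of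
`L_m` has measure `1` (realized as normalized `(m-1)`-dimensional Hausdorff measure). -/
noncomputable def lamv (m : ℕ) (u v : Fin m → ℝ) : Measure (Fin m → ℝ) :=
  (μH[(m : ℝ) - 1] (mesh u v))⁻¹ • μH[(m : ℝ) - 1]

/-- the subtile `R_m(i)` of the Rauzy fractal. -/
noncomputable def Rtile {m : ℕ} (u v : Fin m → ℝ) (i : Fin m) : Set (Fin m → ℝ) :=
  closure {x | ∃ (k : ℕ) (p s : List (Fin m)),
    fixWord m k = p ++ i :: s ∧ x = proj u v (ab p)}

/-- the Rauzy fractal `R_m` of `σ_m`. -/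
noncomputable def Rfrac {m : ℕ} (u v : Fin m → ℝ) : Set (Fin m → ℝ) :=
  closure {x | ∃ (k : ℕ) (p s : List (Fin m)),
    fixWord m k = p ++ s ∧ x = proj u v (ab p)}

/-- interior of `A` relative to the subspace `V`. -/
def relInterior {X : Type*} [TopologicalSpace X] (V A : Set X) : Set X :=
  Subtype.val '' interior (Subtype.val ⁻¹' A : Set V)

/-- boundary of `A` relative to the subspace `V`. -/
def relFrontier {X : Type*} [TopologicalSpace X] (V A : Set X) : Set X :=
  Subtype.val '' frontier (Subtype.val ⁻¹' A : Set V)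

/-- minimal number of sets of diameter `≤ δ` needed to cover `A`. -/
noncomputable def coverNum {X : Type*} [PseudoMetricSpace X] (A : Set X) (δ : ℝ) : ℕ :=
  sInf {n : ℕ | ∃ f : Fin n → Set X, (∀ i, Metric.diam (f i) ≤ δ) ∧ A ⊆ ⋃ i, f i}

/-- the (upper) box counting dimension. -/
noncomputable def dimB {X : Type*} [PseudoMetricSpace X] (A : Set X) : ℝ :=
  Filter.limsup (fun δ : ℝ => Real.log (coverNum A δ) / Real.log (1 / δ))
    (nhdsWithin 0 (Set.Ioi 0))

/-- the one-dimensional star discrepancy `D_N`. -/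
noncomputable def starDisc1 (y : ℕ → ℝ) (N : ℕ) : ℝ :=
  sSup {d : ℝ | ∃ ω : ℝ, 0 < ω ∧ ω ≤ 1 ∧
    d = |(∑ n ∈ Finset.range N,
        Set.indicator (Set.Ico 0 ω) (fun _ => (1 : ℝ)) (y n)) / N - ω|}

/-- the `s`-dimensional star discrepancy `D_N`. -/
noncomputable def starDisc {s : ℕ} (y : ℕ → Fin s → ℝ) (N : ℕ) : ℝ :=
  sSup {d : ℝ | ∃ ω : Fin s → ℝ, (∀ i, 0 < ω i ∧ ω i ≤ 1) ∧
    d = |(∑ n ∈ Finset.range N,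
        Set.indicator (Set.univ.pi fun i => Set.Ico (0 : ℝ) (ω i)) (fun _ => (1 : ℝ)) (y n)) / N -
      ∏ i, ω i|}

/-- `i_0 →^{p_0} i_1 →^{p_1} ⋯ →^{p_{k-1}} i_k` is a walk of length `k` in the
prefix-suffix graph `G_{σ_m}`: for each step there is an edge from `i_t` to
`i_{t+1}` labelled `(p_t, i_t, s_t)`, i.e. `σ_m(i_{t+1}) = p_t i_t s_t`. -/
def IsWalk {m : ℕ} (k : ℕ) (i : Fin (k + 1) → Fin m) (p : Fin k → List (Fin m)) : Prop :=
  ∀ t : Fin k, ∃ s : List (Fin m), sub (i t.succ) = p t ++ i t.castSucc :: s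

/-- the collection `S_k^{(m)}` of level-`k` subtiles
`B_m^k R_m(i_k) + π_c l(σ_m^{k-1}(p_{k-1})⋯σ_m(p_1)p_0)` of the Rauzy fractal. -/
noncomputable def levelTiles (m k : ℕ) (u v : Fin m → ℝ) : Set (Set (Fin m → ℝ)) :=
  {S | ∃ (i : Fin (k + 1) → Fin m) (p : Fin k → List (Fin m)), IsWalk k i p ∧
    S = (fun x => (B m ^ k).mulVec x +
          ∑ t : Fin k, proj u v (ab (subw^[(t : ℕ)] (p t)))) '' Rtile u v (i (Fin.last k))}

/-- the saturation `S + L_m` of a set `S` by the lattice `L_m`. -/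
def satur {m : ℕ} (u v : Fin m → ℝ) (S : Set (Fin m → ℝ)) : Set (Fin m → ℝ) :=
  {x | ∃ y ∈ S, ∃ l ∈ latt u v, x = y + l}


/-
The key fact is that an admissible digit string satisfies `Σ_{j<k} ε_j F_j < F_k`. Split off the
maximal block of ones ending at position `k - 1`, say at positions `a, …, k - 1`: it has fewer than
`m` digits and the digit below it is `0`, so by induction the sum is less than
`F_{a-1} + F_a + ⋯ + F_{k-1}`, a sum of at most `m` consecutive terms, hence at most `F_k`.
Uniqueness follows by comparing top digits. Existence is the greedy algorithm: the remainder
`n - F_k` is less than `F_{k+1} - F_k = F_{k-m+1} + ⋯ + F_{k-1}`, so adding the top digit never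
completes a block of `m` ones.
-/

section Recurrence

variable {m k a : ℕ}

theorem F_eq_ite (m k : ℕ) :
    F m k = if k < m then 2 ^ k else ∑ j ∈ Finset.range m, F m (k - j - 1) := by
  unfold F
  rw [Nat.strongRecOn_eq]
  split
  · rfl
  · exact Finset.sum_attach (Finset.range m) fun j => F m (k - j - 1)

theorem F_of_lt (h : k < m) : F m k = 2 ^ k := by
  rw [F_eq_ite, if_pos h]

theorem F_eq_sum_Ico (h : m ≤ k) : F m k = ∑ j ∈ Finset.Ico (k - m) k, F m j := by
  rw [F_eq_ite, if_neg (Nat.not_lt.2 h), Finset.sum_Ico_eq_sum_range,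
    show k - (k - m) = m by omega, ← Finset.sum_range_reflect]
  refine Finset.sum_congr rfl fun j hj => ?_
  have := Finset.mem_range.1 hj
  congr 1
  omega

theorem F_eq_sum_range_add_one (h : k < m) : F m k = ∑ j ∈ Finset.range k, F m j + 1 := by
  induction k with
  | zero => simp [F_of_lt h]
  | succ k ih =>
    rw [Finset.sum_range_succ, add_right_comm, ← ih (by omega), F_of_lt h, F_of_lt (by omega),
      pow_succ]
    ring

theorem sum_Ico_F_le (h : k ≤ a + m) : ∑ j ∈ Finset.Ico a k, F m j ≤ F m k := by
  rcases lt_or_ge k m with hk | hk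
  · calc ∑ j ∈ Finset.Ico a k, F m j ≤ ∑ j ∈ Finset.range k, F m j :=
          Finset.sum_le_sum_of_subset fun j hj => by
            simp only [Finset.mem_Ico, Finset.mem_range] at hj ⊢
            exact hj.2
      _ ≤ F m k := by rw [F_eq_sum_range_add_one hk]; omega
  · rw [F_eq_sum_Ico hk]
    exact Finset.sum_le_sum_of_subset (Finset.Ico_subset_Ico (by omega) le_rfl)

theorem F_pos (hm : 1 ≤ m) (k : ℕ) : 0 < F m k := by
  induction k with
  | zero => simp [F_of_lt hm]
  | succ k ih =>
    have := sum_Ico_F_le (m := m) (a := k) (k := k + 1) (by omega)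
    rw [Nat.Ico_succ_singleton, Finset.sum_singleton] at this
    omega

theorem F_lt_succ (hm : 2 ≤ m) (k : ℕ) : F m k < F m (k + 1) := by
  rcases k with _ | k
  · simp [F_of_lt (show 0 < m by omega), F_of_lt (show 1 < m by omega)]
  · have h := sum_Ico_F_le (m := m) (a := k) (k := k + 1 + 1) (by omega)
    rw [Finset.sum_Ico_succ_top (by omega), Nat.Ico_succ_singleton, Finset.sum_singleton] at h
    have := F_pos (show 1 ≤ m by omega) k
    omega

theorem F_strictMono (hm : 2 ≤ m) : StrictMono (F m) :=
  strictMono_nat_of_lt_succ (F_lt_succ hm)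

theorem F_succ_le_two_mul (k : ℕ) : F m (k + 1) ≤ 2 * F m k := by
  obtain rfl | hm := Nat.eq_zero_or_pos m
  · rw [F_eq_sum_Ico (Nat.zero_le _)]
    simp
  rcases lt_or_ge (k + 1) m with hk | hk
  · rw [F_of_lt hk, F_of_lt (by omega), pow_succ, mul_comm]
  · rw [F_eq_sum_Ico hk, Finset.sum_Ico_succ_top (by omega)]
    have := sum_Ico_F_le (m := m) (a := k + 1 - m) (k := k) (by omega)
    omega

end Recurrence

def Admissible (m : ℕ) (ε : ℕ → ℕ) : Prop :=
  (∀ j, ε j ≤ 1) ∧ ∀ j, ¬ ∀ i < m, ε (j + i) = 1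

theorem nuk_succ (m : ℕ) (ε : ℕ → ℕ) (k : ℕ) : nuk m ε (k + 1) = nuk m ε k + ε k * F m k :=
  Finset.sum_range_succ _ _

theorem nuk_eq_add_sum_Ico (m : ℕ) (ε : ℕ → ℕ) {a k : ℕ} (h : a ≤ k) :
    nuk m ε k = nuk m ε a + ∑ j ∈ Finset.Ico a k, ε j * F m j :=
  (Finset.sum_range_add_sum_Ico _ h).symm

theorem nuk_eq_of_le (m : ℕ) {ε : ℕ → ℕ} {J J' : ℕ} (hε : ∀ j, J ≤ j → ε j = 0) (h : J ≤ J') :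
    nuk m ε J' = nuk m ε J := by
  rw [nuk_eq_add_sum_Ico m ε h, Finset.sum_eq_zero fun j hj => by
    rw [hε j (Finset.mem_Ico.1 hj).1, zero_mul], add_zero]

theorem sum_Ico_mul_F_of_eq_one (m : ℕ) {ε : ℕ → ℕ} {a k : ℕ}
    (hε : ∀ j ∈ Finset.Ico a k, ε j = 1) :
    ∑ j ∈ Finset.Ico a k, ε j * F m j = ∑ j ∈ Finset.Ico a k, F m j :=
  Finset.sum_congr rfl fun j hj => by rw [hε j hj, one_mul]

theorem sum_Ico_F_le_nuk (m : ℕ) {ε : ℕ → ℕ} {a k : ℕ} (h : a ≤ k)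
    (hε : ∀ j ∈ Finset.Ico a k, ε j = 1) : ∑ j ∈ Finset.Ico a k, F m j ≤ nuk m ε k := by
  rw [nuk_eq_add_sum_Ico m ε h, sum_Ico_mul_F_of_eq_one m hε]
  omega

namespace Admissible

variable {m : ℕ} {ε : ℕ → ℕ}

theorem exists_run_start (hε : Admissible m ε) (k : ℕ) :
    ∃ a ≤ k, k < a + m ∧ (a = 0 ∨ ε (a - 1) = 0) ∧ ∀ j ∈ Finset.Ico a k, ε j = 1 := by
  set P : ℕ → Prop := fun a => a = 0 ∨ ε (a - 1) = 0
  set a := Nat.findGreatest P k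
  have hP : P a := Nat.findGreatest_spec (Nat.zero_le k) (Or.inl rfl)
  have hones : ∀ j ∈ Finset.Ico a k, ε j = 1 := by
    intro j hj
    obtain ⟨haj, hjk⟩ := Finset.mem_Ico.1 hj
    have hnot : ¬ P (j + 1) := Nat.findGreatest_is_greatest (n := k) (by omega) (by omega)
    have := hε.1 j
    simp only [P, add_tsub_cancel_right, not_or] at hnot
    omega
  refine ⟨a, Nat.findGreatest_le k, ?_, hP, hones⟩
  by_contra hlong
  exact hε.2 (k - m) fun i hi => hones _ (Finset.mem_Ico.2 ⟨by omega, by omega⟩)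

theorem nuk_lt_F (hε : Admissible m ε) (k : ℕ) : nuk m ε k < F m k := by
  induction k using Nat.strong_induction_on with
  | _ k ih =>
  obtain ⟨a, hak, hka, hstart, hones⟩ := hε.exists_run_start k
  rw [nuk_eq_add_sum_Ico m ε hak, sum_Ico_mul_F_of_eq_one m hones]
  rcases Nat.eq_zero_or_pos a with rfl | ha
  · rw [F_eq_sum_range_add_one (show k < m by omega), Finset.range_eq_Ico]
    simp [nuk]
  · have hzero : ε (a - 1) = 0 := hstart.resolve_left ha.ne'
    have hlow : nuk m ε a = nuk m ε (a - 1) := by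
      rw [show a = a - 1 + 1 by omega, nuk_succ, Nat.add_sub_cancel, hzero, zero_mul, add_zero]
    have hIH := ih (a - 1) (by omega)
    have hsplit := Finset.sum_eq_sum_Ico_succ_bot (show a - 1 < k by omega) (F m)
    rw [Nat.sub_add_cancel ha] at hsplit
    have := sum_Ico_F_le (m := m) (a := a - 1) (k := k) (by omega)
    omega

theorem eq_of_nuk_eq {ε' : ℕ → ℕ} (hε : Admissible m ε) (hε' : Admissible m ε') :
    ∀ J, nuk m ε J = nuk m ε' J → ∀ j < J, ε j = ε' j := by
  intro J
  induction J with
  | zero => intro _ j hj; omega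
  | succ J ih =>
    intro hsum j hj
    rw [nuk_succ, nuk_succ] at hsum
    have hlt := hε.nuk_lt_F J
    have hlt' := hε'.nuk_lt_F J
    have htop : ε J = ε' J := by
      have h1 := hε.1 J
      have h2 := hε'.1 J
      interval_cases hx : ε J <;> interval_cases hy : ε' J <;> omega
    rw [htop] at hsum
    rcases Nat.lt_succ_iff_lt_or_eq.1 hj with hj | rfl
    · exact ih (by omega) j hj
    · exact htop

theorem update_top {k : ℕ} (hε : Admissible m ε) (htop : ∀ j, k ≤ j → ε j = 0)
    (hrun : ∀ a, a + m = k + 1 → ∃ j ∈ Finset.Ico a k, ε j ≠ 1) :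
    Admissible m (Function.update ε k 1) := by
  refine ⟨fun j => ?_, fun a hones => ?_⟩
  · rcases eq_or_ne j k with rfl | hj
    · simp
    · simpa [hj] using hε.1 j
  have hm : 0 < m := by
    by_contra h0
    exact hε.2 0 fun i hi => by omega
  rcases lt_trichotomy (a + m) (k + 1) with hlt | heq | hgt
  · exact hε.2 a fun i hi => by
      simpa [Function.update_of_ne (show a + i ≠ k by omega)] using hones i hi
  · obtain ⟨j, hj, hne⟩ := hrun a heq
    obtain ⟨haj, hjk⟩ := Finset.mem_Ico.1 hj
    have := hones (j - a) (by omega)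
    rw [show a + (j - a) = j by omega, Function.update_of_ne (by omega)] at this
    exact hne this
  · have := hones (m - 1) (by omega)
    rw [Function.update_of_ne (by omega), htop _ (by omega)] at this
    exact zero_ne_one this

end Admissible

theorem exists_admissible_nuk_eq {m : ℕ} (hm : 0 < m) :
    ∀ k n, n < F m k → ∃ ε, Admissible m ε ∧ (∀ j, k ≤ j → ε j = 0) ∧ nuk m ε k = n := by
  intro k
  induction k with
  | zero =>
    intro n hn
    rw [F_of_lt (by omega), pow_zero, Nat.lt_one_iff] at hn
    subst hn
    refine ⟨fun _ => 0, ⟨fun _ => Nat.zero_le _, fun _ h => ?_⟩, fun _ _ => rfl, rfl⟩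
    exact zero_ne_one (h 0 (by omega))
  | succ k ih =>
    intro n hn
    rcases lt_or_ge n (F m k) with hnk | hnk
    · obtain ⟨ε, hε, htop, hval⟩ := ih n hnk
      refine ⟨ε, hε, fun j hj => htop j (by omega), ?_⟩
      rw [nuk_succ, hval, htop k le_rfl, zero_mul, add_zero]
    · have hrest : n - F m k < F m k := by have := F_succ_le_two_mul (m := m) k; omega
      obtain ⟨ε, hε, htop, hval⟩ := ih (n - F m k) hrest
      have hlow : nuk m (Function.update ε k 1) k = nuk m ε k :=
        Finset.sum_congr rfl fun j hj => by
          rw [Function.update_of_ne (Finset.mem_range.1 hj).ne]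
      have hrun : ∀ a, a + m = k + 1 → ∃ j ∈ Finset.Ico a k, ε j ≠ 1 := by
        intro a ha
        by_contra! hones
        have hblock := sum_Ico_F_le_nuk m (show a ≤ k by omega) hones
        have hrec := F_eq_sum_Ico (show m ≤ k + 1 by omega)
        rw [show k + 1 - m = a by omega, Finset.sum_Ico_succ_top (by omega)] at hrec
        omega
      refine ⟨Function.update ε k 1, hε.update_top htop hrun, fun j hj => ?_, ?_⟩
      · rw [Function.update_of_ne (by omega), htop j (by omega)]
      · rw [nuk_succ, hlow, hval, Function.update_self, one_mul]
        omega

/-- every `n ∈ ℕ` admits exactly one expansion `n = Σ_j ε_j F_j^{(m)}`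
with digits in `{0,1}`, finitely many nonzero, and no `m` consecutive digits equal to `1`. -/
theorem stmt16 (m : ℕ) (hm : 2 ≤ m) (n : ℕ) :
    ∃ ε : ℕ → ℕ, IsGreedy m n ε ∧ ∀ ε' : ℕ → ℕ, IsGreedy m n ε' → ε' = ε := by
  have hn : n < F m (n + 1) := (F_strictMono hm).le_apply.trans_lt (F_lt_succ hm n)
  obtain ⟨ε, hε, htop, hval⟩ := exists_admissible_nuk_eq (by omega) (n + 1) n hn
  refine ⟨ε, ⟨hε.1, hε.2, n + 1, htop, hval.symm⟩, ?_⟩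
  rintro ε' ⟨hd', hr', J', htop', hval'⟩
  set J := max J' (n + 1)
  have hagree := Admissible.eq_of_nuk_eq ⟨hd', hr'⟩ hε J (by
    rw [nuk_eq_of_le m htop' (le_max_left _ _), nuk_eq_of_le m htop (le_max_right _ _), hval]
    exact hval'.symm)
  funext j
  rcases lt_or_ge j J with hj | hj
  · exact hagree j hj
  · rw [htop' j (le_of_max_le_left hj), htop j (le_of_max_le_right hj)]

end Mbon
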